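/- arXiv:0808.2181 — 2 statements merged into one kernel-verified Lean document; each statement's English description precedes it below -/
import Mathlib

section
/- Let λ_b > 0. If Z is a nonnegative random variable with cumulative distribution function P(Z ≤ z) = 1 − exp(−4π λ_b z²) for z ≥ 0, and conditioned on Z = z the random variable D has conditional CDF P(D ≤ t | Z = z) = min(t²/z², 1) for t ≥ 0, then the density of D is f_D(t) = −8π λ_b t · Ei(−4π λ_b t²), where Ei(x) = ∫_{−∞}^{x} e^{u}/u du is the exponential integral. -/
/-!
Write `a = 4πλ_b`. Splitting the integral at `z = s`, the mixture CDF is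
`F(s) = 1 - e^{-a s²} + 2 a s² ∫_s^∞ e^{-a z²} / z dz`, and the substitution `u = -a z²` turns the
tail integral into `-Ei(-a s²) / 2`. Differentiating, the boundary terms cancel and only
`2 s · 2 a ∫_s^∞ e^{-a z²} / z dz = -2 a s Ei(-a s²)` survives.
-/

open Real MeasureTheory

noncomputable def Ei (x : ℝ) : ℝ := ∫ u in Set.Iic x, Real.exp u / u

open Set

theorem hasDerivAt_integral_Ioi {E : Type*} [NormedAddCommGroup E] [NormedSpace ℝ E]
    [CompleteSpace E] {f : ℝ → E} {c t : ℝ} (hct : c < t) (hf : IntegrableOn f (Ioi c))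
    (hft : ContinuousAt f t) :
    HasDerivAt (fun s => ∫ z in Ioi s, f z) (-f t) t := by
  have hmeas : StronglyMeasurableAtFilter f (nhds t) :=
    ⟨Ioi c, Ioi_mem_nhds hct, hf.aestronglyMeasurable⟩
  have hint : IntervalIntegrable f volume c t :=
    (intervalIntegrable_iff_integrableOn_Ioc_of_le hct.le).2 (hf.mono_set Ioc_subset_Ioi_self)
  refine ((intervalIntegral.integral_hasDerivAt_right hint hmeas hft).const_sub
    (∫ z in Ioi c, f z)).congr_of_eventuallyEq ?_
  filter_upwards [Ioi_mem_nhds hct] with s hs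
  rw [← intervalIntegral.integral_Ioi_sub_Ioi hf hs.le, sub_sub_cancel]

theorem integrableOn_exp_neg_mul_sq_div {a s : ℝ} (ha : 0 < a) (hs : 0 < s) :
    IntegrableOn (fun z => exp (-(a * z ^ 2)) / z) (Ioi s) := by
  have hdom : IntegrableOn (fun z => exp (-(a * z ^ 2)) / s) (Ioi s) := by
    simpa only [neg_mul] using ((integrable_exp_neg_mul_sq ha).div_const s).integrableOn
  refine hdom.mono' ?_ ?_
  · exact (ContinuousOn.div (by fun_prop) continuousOn_id fun z hz =>
      (hs.trans hz).ne').aestronglyMeasurable measurableSet_Ioi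
  · filter_upwards [ae_restrict_mem measurableSet_Ioi] with z hz
    rw [norm_div, Real.norm_of_nonneg (exp_pos _).le, Real.norm_of_nonneg (hs.trans hz).le]
    exact div_le_div_of_nonneg_left (exp_pos _).le hs hz.le

theorem hasDerivAt_neg_mul_sq (a x : ℝ) :
    HasDerivAt (fun x => -(a * x ^ 2)) (-(2 * a * x)) x :=
  ((hasDerivAt_pow 2 x).const_mul a).neg.congr_deriv (by push_cast; ring)

theorem image_neg_mul_sq_Ioi {a t : ℝ} (ha : 0 < a) (ht : 0 ≤ t) :
    (fun z => -(a * z ^ 2)) '' Ioi t = Iio (-(a * t ^ 2)) := by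
  ext u
  constructor
  · rintro ⟨z, hz, rfl⟩
    have : t ^ 2 < z ^ 2 := pow_lt_pow_left₀ hz ht two_ne_zero
    exact neg_lt_neg (mul_lt_mul_of_pos_left this ha)
  · intro hu
    have hpos : t ^ 2 < -u / a := by
      rw [lt_div_iff₀ ha]
      linarith [mem_Iio.1 hu]
    refine ⟨√(-u / a), ?_, ?_⟩
    · simpa [sqrt_sq ht] using sqrt_lt_sqrt (sq_nonneg t) hpos
    · dsimp only
      rw [sq_sqrt ((sq_nonneg t).trans hpos.le)]
      field_simp

theorem Ei_neg_mul_sq {a t : ℝ} (ha : 0 < a) (ht : 0 < t) :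
    Ei (-(a * t ^ 2)) = -2 * ∫ z in Ioi t, exp (-(a * z ^ 2)) / z := by
  have hanti : StrictAntiOn (fun z => -(a * z ^ 2)) (Ioi t) := fun x hx y hy hxy =>
    neg_lt_neg (mul_lt_mul_of_pos_left
      (pow_lt_pow_left₀ hxy (ht.trans hx).le two_ne_zero) ha)
  have hsubst := integral_image_eq_integral_abs_deriv_smul measurableSet_Ioi
    (fun z _ => (hasDerivAt_neg_mul_sq a z).hasDerivWithinAt) hanti.injOn (fun u => exp u / u)
  rw [image_neg_mul_sq_Ioi ha ht.le] at hsubst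
  rw [Ei, ← setIntegral_congr_set Iio_ae_eq_Iic, hsubst, ← integral_const_mul]
  refine setIntegral_congr_fun measurableSet_Ioi fun z hz => ?_
  have hz : 0 < z := ht.trans hz
  rw [abs_neg, abs_of_pos (by positivity), smul_eq_mul]
  field_simp

theorem integral_Ioc_mul_exp_neg_mul_sq (a : ℝ) {s : ℝ} (hs : 0 ≤ s) :
    ∫ z in Ioc 0 s, 2 * a * z * exp (-(a * z ^ 2)) = 1 - exp (-(a * s ^ 2)) := by
  have hderiv : ∀ z ∈ uIcc 0 s, HasDerivAt (fun z => -exp (-(a * z ^ 2)))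
      (2 * a * z * exp (-(a * z ^ 2))) z := fun z _ =>
    (hasDerivAt_neg_mul_sq a z).exp.neg.congr_deriv (by ring)
  rw [← intervalIntegral.integral_of_le hs, intervalIntegral.integral_eq_sub_of_hasDerivAt
    hderiv ((by fun_prop : Continuous _).intervalIntegrable 0 s)]
  simp [sub_eq_add_neg, add_comm]

theorem integral_min_sq_div_sq_mul {a s : ℝ} (ha : 0 < a) (hs : 0 < s) :
    ∫ z in Ioi 0, min (s ^ 2 / z ^ 2) 1 * (2 * a * z * exp (-(a * z ^ 2)))
      = 1 - exp (-(a * s ^ 2)) + 2 * a * s ^ 2 * ∫ z in Ioi s, exp (-(a * z ^ 2)) / z := by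
  set g := fun z => min (s ^ 2 / z ^ 2) 1 * (2 * a * z * exp (-(a * z ^ 2)))
  have hnear : EqOn g (fun z => 2 * a * z * exp (-(a * z ^ 2))) (Ioc 0 s) := fun z hz => by
    have : 1 ≤ s ^ 2 / z ^ 2 := by
      rw [one_le_div (pow_pos hz.1 2)]
      exact pow_le_pow_left₀ hz.1.le hz.2 2
    simp only [g, min_eq_right this, one_mul]
  have hfar : EqOn g (fun z => 2 * a * s ^ 2 * (exp (-(a * z ^ 2)) / z)) (Ioi s) := fun z hz => by
    have hz0 : 0 < z := hs.trans hz
    have : s ^ 2 / z ^ 2 ≤ 1 := by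
      rw [div_le_one (pow_pos hz0 2)]
      exact pow_le_pow_left₀ hs.le hz.le 2
    simp only [g, min_eq_left this]
    field_simp
  have hint_near : IntegrableOn g (Ioc 0 s) :=
    (Continuous.integrableOn_Ioc (by fun_prop)).congr_fun hnear.symm measurableSet_Ioc
  have hint_far : IntegrableOn g (Ioi s) :=
    IntegrableOn.congr_fun ((integrableOn_exp_neg_mul_sq_div ha hs).const_mul _) hfar.symm
      measurableSet_Ioi
  rw [← Ioc_union_Ioi_eq_Ioi hs.le,
    setIntegral_union Ioc_disjoint_Ioi_same measurableSet_Ioi hint_near hint_far,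
    setIntegral_congr_fun measurableSet_Ioc hnear, setIntegral_congr_fun measurableSet_Ioi hfar,
    integral_Ioc_mul_exp_neg_mul_sq a hs.le, integral_const_mul]

theorem hasDerivAt_integral_min_sq_div_sq_mul {a t : ℝ} (ha : 0 < a) (ht : 0 < t) :
    HasDerivAt (fun s => ∫ z in Ioi 0, min (s ^ 2 / z ^ 2) 1 * (2 * a * z * exp (-(a * z ^ 2))))
      (-(2 * a * t) * Ei (-(a * t ^ 2))) t := by
  have htail : HasDerivAt (fun s => ∫ z in Ioi s, exp (-(a * z ^ 2)) / z)
      (-(exp (-(a * t ^ 2)) / t)) t :=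
    hasDerivAt_integral_Ioi (half_lt_self ht) (integrableOn_exp_neg_mul_sq_div ha (half_pos ht))
      ((by fun_prop : Continuous fun z => exp (-(a * z ^ 2))).continuousAt.div
        continuousAt_id ht.ne')
  have hsplit := (((hasDerivAt_neg_mul_sq a t).exp.const_sub 1).add
    (((hasDerivAt_pow 2 t).const_mul (2 * a)).mul htail))
  refine (hsplit.congr_of_eventuallyEq ?_).congr_deriv ?_
  · filter_upwards [Ioi_mem_nhds ht] with s hs
    exact integral_min_sq_div_sq_mul ha hs
  · rw [Ei_neg_mul_sq ha ht]
    field_simp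
    ring

theorem stmt0 (lb : ℝ) (hlb : 0 < lb) (t : ℝ) (ht : 0 < t) :
    HasDerivAt (fun s : ℝ =>
        ∫ z in Set.Ioi (0 : ℝ),
          min (s ^ 2 / z ^ 2) 1 * (8 * π * lb * z * Real.exp (-(4 * π * lb * z ^ 2))))
      (-(8 * π * lb * t) * Ei (-(4 * π * lb * t ^ 2))) t := by
  convert hasDerivAt_integral_min_sq_div_sq_mul (a := 4 * π * lb) (by positivity) ht using 1
  · simp only [← mul_assoc, show (2 : ℝ) * 4 = 8 by norm_num]
  · ring
end

section
/- Let δ ∈ (0,1) and ζ, d, λ > 0 and w > 0 with (δ/(1−δ)) ζ d² w^{−δ} λ < 1. Define ξ = 1 − [(δ/(2−δ)) ζ d² w^{−δ} λ] / [1 − (δ/(1−δ)) ζ d² w^{−δ} λ]². Then as λ → 0⁺, the upper-bound outage probability P^u(λ) = 1 − ξ · exp(−ζ λ w^{−δ} d²) satisfies P^u(λ) = (2/(2−δ)) ζ w^{−δ} d² λ + O(λ²). -/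
open Real Asymptotics Filter Topology

/-!
The difference is analytic at `0` and vanishes there, so it is `O(λ²)` as soon as its derivative
at `0` vanishes. Writing `c = ζ w^{-δ} d²`, the factor `ξ` is `1 - (δ/(2-δ)) c λ + O(λ²)` and the
exponential is `1 - c λ + O(λ²)`, so `1 - ξ e^{-cλ}` has slope `(δ/(2-δ) + 1) c = (2/(2-δ)) c`.
-/

theorem AnalyticAt.isBigO_sq_of_hasDerivAt_zero {𝕜 F : Type*} [NontriviallyNormedField 𝕜]
    [NormedAddCommGroup F] [NormedSpace 𝕜 F] {f : 𝕜 → F} (hf : AnalyticAt 𝕜 f 0)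
    (h0 : f 0 = 0) (h1 : HasDerivAt f 0 0) : f =O[𝓝 0] fun x => x ^ 2 := by
  obtain ⟨p, hp⟩ := hf
  have hp0 : p.coeff 0 = 0 := by rw [FormalMultilinearSeries.coeff, hp.coeff_zero, h0]
  have hp1 : p.coeff 1 = 0 := hp.hasDerivAt.unique h1
  have hsum : ∀ y, p.partialSum 2 y = 0 := fun y => by
    simp [FormalMultilinearSeries.partialSum, Finset.sum_range_succ, hp0, hp1]
  have hO := hp.isBigO_sub_partialSum_pow 2
  simp only [zero_add, hsum, sub_zero, ← norm_pow] at hO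
  exact hO.trans (isBigO_refl _ _).norm_left

theorem outage_sub_linear_isBigO_sq (a b c : ℝ) :
    (fun x : ℝ => 1 - (1 - a * x / (1 - b * x) ^ 2) * exp (-(c * x)) - (a + c) * x)
      =O[𝓝 0] fun x => x ^ 2 := by
  have hden : (1 - b * 0) ^ 2 ≠ 0 := by norm_num
  refine AnalyticAt.isBigO_sq_of_hasDerivAt_zero ?_ (by simp) ?_
  · have hu : AnalyticAt ℝ (fun x : ℝ => a * x / (1 - b * x) ^ 2) 0 :=
      AnalyticAt.div (by fun_prop) (by fun_prop) hden
    fun_prop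
  · have hnum : HasDerivAt (fun x : ℝ => a * x) a 0 := by
      simpa using (hasDerivAt_id (0 : ℝ)).const_mul a
    have hsq : HasDerivAt (fun x : ℝ => (1 - b * x) ^ 2) (-(2 * b)) 0 := by
      simpa using (((hasDerivAt_id (0 : ℝ)).const_mul b).const_sub 1).fun_pow 2
    have hu : HasDerivAt (fun x : ℝ => a * x / (1 - b * x) ^ 2) a 0 := by
      simpa using hnum.fun_div hsq hden
    have hv : HasDerivAt (fun x : ℝ => exp (-(c * x))) (-c) 0 := by
      simpa using (((hasDerivAt_id (0 : ℝ)).const_mul c).neg).exp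
    convert (((hu.const_sub 1).fun_mul hv).const_sub 1).fun_sub
      ((hasDerivAt_id (0 : ℝ)).const_mul (a + c)) using 1
    · rfl
    · simp only [mul_zero, mul_one, neg_zero, exp_zero, zero_div, sub_zero]
      ring

theorem stmt15_general (δ ζ d w : ℝ) (hδ1 : δ < 1) :
    (fun lam : ℝ =>
        (1 - (1 - δ / (2 - δ) * ζ * d ^ 2 * w ^ (-δ) * lam /
              (1 - δ / (1 - δ) * ζ * d ^ 2 * w ^ (-δ) * lam) ^ 2) *
            Real.exp (-(ζ * lam * w ^ (-δ) * d ^ 2))) -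
          2 / (2 - δ) * ζ * w ^ (-δ) * d ^ 2 * lam)
      =O[nhdsWithin 0 (Set.Ioi 0)] fun lam => lam ^ 2 := by
  have h2δ : (2 : ℝ) - δ ≠ 0 := by linarith
  have hcoeff : 2 / (2 - δ) * ζ * w ^ (-δ) * d ^ 2 =
      δ / (2 - δ) * ζ * d ^ 2 * w ^ (-δ) + ζ * w ^ (-δ) * d ^ 2 := by
    field_simp
    ring
  refine ((outage_sub_linear_isBigO_sq (δ / (2 - δ) * ζ * d ^ 2 * w ^ (-δ))
    (δ / (1 - δ) * ζ * d ^ 2 * w ^ (-δ)) (ζ * w ^ (-δ) * d ^ 2)).mono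
    nhdsWithin_le_nhds).congr_left fun lam => ?_
  rw [hcoeff]
  ring_nf

theorem stmt15 (δ ζ d w : ℝ) (hδ0 : 0 < δ) (hδ1 : δ < 1) (hζ : 0 < ζ) (hd : 0 < d)
    (hw : 0 < w) :
    (fun lam : ℝ =>
        (1 - (1 - δ / (2 - δ) * ζ * d ^ 2 * w ^ (-δ) * lam /
              (1 - δ / (1 - δ) * ζ * d ^ 2 * w ^ (-δ) * lam) ^ 2) *
            Real.exp (-(ζ * lam * w ^ (-δ) * d ^ 2))) -
          2 / (2 - δ) * ζ * w ^ (-δ) * d ^ 2 * lam)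
      =O[nhdsWithin 0 (Set.Ioi 0)] fun lam => lam ^ 2 :=
  stmt15_general δ ζ d w hδ1
end
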